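/- Let d, k ∈ ℕ, let U = (U₁,…,U_k) be independent random variables each uniformly distributed on [0,1], and let σ be a random map from {1,…,d} to {1,…,k} (equivalently, a d×k categorical random matrix Γ with entries Z_{is} = 1_{σ(i)=s}) independent of U. Define X_i = U_{σ(i)} for i ∈ [d]. Then: (i) each X_i is uniformly distributed on [0,1]; (ii) for all i ≠ j and every admissible function g, Corr(g(X_i), g(X_j)) = P(σ(i) = σ(j)); in particular (X₁,…,X_d) has the invariant correlation matrix R with R_{ij} = P(σ(i) = σ(j)) = (E[ΓΓᵀ])_{ij} for i ≠ j. -/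

import Mathlib

/-!
Since `σ` is independent of `U = (U_s)`, the law of any functional `F(σ, U)` is the mixture
`∑ₐ P(σ = a) • law(F(a, U))`. For `X_i = U_{σ i}` every component is the common law of the `U_s`,
which gives the marginals. For `g(X_i) g(X_j)` the component indexed by `(s, t)` has mean
`E[g(U)²]` if `s = t` and `E[g(U)]²` otherwise, so with `p = P(σ i = σ j)` we get
`E[g(X_i) g(X_j)] = p E[g(U)²] + (1 - p) E[g(U)]²`, i.e. `Cov(g(X_i), g(X_j)) = p Var(g(U))`.
The plain correlation is the case `g = id`, admissible because `Var(U) = 1/12 > 0`.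
-/

open MeasureTheory ProbabilityTheory

variable {Ω : Type*} [MeasurableSpace Ω]

noncomputable def cov (μ : Measure Ω) (X Y : Ω → ℝ) : ℝ :=
  ∫ ω, (X ω - ∫ a, X a ∂μ) * (Y ω - ∫ a, Y a ∂μ) ∂μ

noncomputable def corr (μ : Measure Ω) (X Y : Ω → ℝ) : ℝ :=
  cov μ X Y / Real.sqrt (variance X μ * variance Y μ)

def Admissible (μ : Measure Ω) (X Y : Ω → ℝ) (g : ℝ → ℝ) : Prop :=
  Measurable g ∧ MemLp (g ∘ X) 2 μ ∧ MemLp (g ∘ Y) 2 μ ∧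
    0 < variance (g ∘ X) μ ∧ 0 < variance (g ∘ Y) μ

def IC (μ : Measure Ω) (X Y : Ω → ℝ) (r : ℝ) : Prop :=
  corr μ X Y = r ∧ ∀ g : ℝ → ℝ, Admissible μ X Y g → corr μ (g ∘ X) (g ∘ Y) = r

section Mixture

variable {α β γ : Type*} [MeasurableSpace α] [MeasurableSingletonClass α]
  [MeasurableSpace β] [MeasurableSpace γ] {μ : Measure Ω} {σ : Ω → α} {V : Ω → β}

theorem measurable_comp_of_countable [Countable α] {F : α → β → γ} (hF : ∀ a, Measurable (F a))
    (hσ : Measurable σ) (hV : Measurable V) : Measurable fun ω => F (σ ω) (V ω) :=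
  (measurable_from_prod_countable_right (f := Function.uncurry F) hF).comp (hσ.prodMk hV)

variable [Fintype α]

theorem map_comp_eq_sum_smul_of_indepFun (hσ : Measurable σ) (hV : Measurable V)
    (hσV : IndepFun σ V μ) {F : α → β → γ} (hF : ∀ a, Measurable (F a)) :
    μ.map (fun ω => F (σ ω) (V ω)) = ∑ a, μ (σ ⁻¹' {a}) • μ.map (fun ω => F a (V ω)) := by
  ext A hA
  have hpre : (fun ω => F (σ ω) (V ω)) ⁻¹' A = ⋃ a, σ ⁻¹' {a} ∩ V ⁻¹' (F a ⁻¹' A) := by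
    ext ω; simp
  have hdisj : Pairwise (Function.onFun Disjoint fun a => σ ⁻¹' {a} ∩ V ⁻¹' (F a ⁻¹' A)) :=
    fun a b hab => Set.disjoint_left.2 fun ω ha hb => hab (ha.1.symm.trans hb.1)
  rw [Measure.map_apply (measurable_comp_of_countable hF hσ hV) hA, hpre,
    measure_iUnion hdisj fun a => (hσ (measurableSet_singleton a)).inter (hV (hF a hA)),
    tsum_fintype, Measure.coe_finsetSum, Finset.sum_apply]
  refine Finset.sum_congr rfl fun a _ => ?_
  rw [Measure.smul_apply, Measure.map_apply (f := fun ω => F a (V ω)) ((hF a).comp hV) hA,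
    smul_eq_mul, hσV.measure_inter_preimage_eq_mul _ _ (measurableSet_singleton a) (hF a hA)]
  rfl

theorem integral_comp_eq_sum_of_indepFun [IsFiniteMeasure μ] (hσ : Measurable σ)
    (hV : Measurable V) (hσV : IndepFun σ V μ) {F : α → β → ℝ} (hF : ∀ a, Measurable (F a))
    (hFint : ∀ a, Integrable (fun ω => F a (V ω)) μ) :
    ∫ ω, F (σ ω) (V ω) ∂μ = ∑ a, μ.real (σ ⁻¹' {a}) * ∫ ω, F a (V ω) ∂μ := by
  have hmap : ∀ a, Integrable (fun x => x) (μ.map fun ω => F a (V ω)) := fun a =>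
    (integrable_map_measure aestronglyMeasurable_id ((hF a).comp hV).aemeasurable).2 (hFint a)
  rw [← integral_map (f := fun x => x) (measurable_comp_of_countable hF hσ hV).aemeasurable
      aestronglyMeasurable_id, map_comp_eq_sum_smul_of_indepFun hσ hV hσV hF,
    integral_finsetSum_measure fun a _ => (hmap a).smul_measure (measure_ne_top _ _)]
  refine Finset.sum_congr rfl fun a _ => ?_
  rw [integral_smul_measure, integral_map (φ := fun ω => F a (V ω)) (f := fun x => x)
    ((hF a).comp hV).aemeasurable aestronglyMeasurable_id]
  rfl

end Mixture

theorem sum_measureReal_preimage_singleton_mul_ite {α : Type*} [Fintype α] [MeasurableSpace α]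
    [MeasurableSingletonClass α] {μ : Measure Ω} [IsProbabilityMeasure μ] {τ : Ω → α}
    (hτ : Measurable τ) (P : α → Prop) [DecidablePred P] (x y : ℝ) :
    ∑ a, μ.real (τ ⁻¹' {a}) * (if P a then x else y)
      = μ.real (τ ⁻¹' {a | P a}) * x + (1 - μ.real (τ ⁻¹' {a | P a})) * y := by
  have hfiber : ∀ (Q : α → Prop) [DecidablePred Q],
      ∑ a with Q a, μ.real (τ ⁻¹' {a}) = μ.real (τ ⁻¹' {a | Q a}) := fun Q _ => by
    rw [sum_measureReal_preimage_singleton _ fun a _ => hτ (measurableSet_singleton a)]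
    simp
  simp only [mul_ite, Finset.sum_ite, ← Finset.sum_mul, hfiber]
  rw [← probReal_compl_eq_one_sub (hτ (Set.toFinite _).measurableSet)]
  rfl

theorem corr_eq_of_cov_eq_mul_variance {μ : Measure Ω} {A B : Ω → ℝ} {p : ℝ}
    (hA : 0 < variance A μ) (hB : variance B μ = variance A μ)
    (hcov : cov μ A B = p * variance A μ) : corr μ A B = p := by
  rw [corr, hcov, hB, Real.sqrt_mul_self hA.le, mul_div_assoc, div_self hA.ne', mul_one]

theorem corr_comp_eq_of_integral_mul_eq {μ : Measure Ω} [IsProbabilityMeasure μ]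
    {ν : Measure ℝ} {Y Z : Ω → ℝ} (hY : Measurable Y) (hZ : Measurable Z)
    (hYν : μ.map Y = ν) (hZν : μ.map Z = ν) {g : ℝ → ℝ} (hg : Measurable g)
    (hgY : MemLp (g ∘ Y) 2 μ) (hgZ : MemLp (g ∘ Z) 2 μ) (hvar : 0 < variance (g ∘ Y) μ)
    {p : ℝ} (hmul : ∫ ω, g (Y ω) * g (Z ω) ∂μ
      = p * ∫ x, g x ^ 2 ∂ν + (1 - p) * (∫ x, g x ∂ν) ^ 2) :
    corr μ (g ∘ Y) (g ∘ Z) = p := by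
  have : IsProbabilityMeasure ν := hYν ▸ Measure.isProbabilityMeasure_map hY.aemeasurable
  have hmean : ∀ W : Ω → ℝ, Measurable W → μ.map W = ν → ∫ ω, (g ∘ W) ω ∂μ = ∫ x, g x ∂ν :=
    fun W hW hWν => by rw [← hWν, integral_map hW.aemeasurable hg.aestronglyMeasurable]; rfl
  have hvarν : ∀ W : Ω → ℝ, Measurable W → μ.map W = ν → variance (g ∘ W) μ = variance g ν :=
    fun W hW hWν => by rw [← hWν, variance_map hg.aemeasurable hW.aemeasurable]
  have hgν : MemLp g 2 ν := by
    rw [← hYν]; exact (memLp_map_measure_iff hg.aestronglyMeasurable hY.aemeasurable).2 hgY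
  refine corr_eq_of_cov_eq_mul_variance hvar (by rw [hvarν Y hY hYν, hvarν Z hZ hZν]) ?_
  rw [hvarν Y hY hYν, variance_eq_sub hgν, cov, ← covariance, covariance_eq_sub hgY hgZ,
    hmean Y hY hYν, hmean Z hZ hZν]
  simp only [Pi.mul_apply, Function.comp_apply, Pi.pow_apply, hmul]
  ring

section RandomlyIndexed

variable {κ : Type*} {μ : Measure Ω} {ν : Measure ℝ} {U : κ → Ω → ℝ}

theorem map_randomlyIndexed_eq_of_indepFun [Fintype κ] [MeasurableSpace κ]
    [MeasurableSingletonClass κ] [IsProbabilityMeasure μ] (hU : ∀ s, Measurable (U s))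
    (hUν : ∀ s, μ.map (U s) = ν) {τ : Ω → κ} (hτ : Measurable τ)
    (hτU : IndepFun τ (fun ω s => U s ω) μ) :
    μ.map (fun ω => U (τ ω) ω) = ν := by
  rw [map_comp_eq_sum_smul_of_indepFun (F := fun s u => u s) hτ (measurable_pi_lambda _ hU) hτU
    measurable_pi_apply]
  simp only [hUν, ← Finset.sum_smul]
  rw [sum_measure_preimage_singleton _ fun s _ => hτ (measurableSet_singleton s)]
  simp

theorem measurable_randomlyIndexed [Countable κ] [MeasurableSpace κ] [MeasurableSingletonClass κ]
    (hU : ∀ s, Measurable (U s)) {τ : Ω → κ} (hτ : Measurable τ) :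
    Measurable fun ω => U (τ ω) ω :=
  measurable_comp_of_countable (F := fun s u => u s) measurable_pi_apply hτ
    (measurable_pi_lambda _ hU)

theorem integral_comp_mul_comp_of_iIndepFun [DecidableEq κ] (hU : ∀ s, Measurable (U s))
    (hUν : ∀ s, μ.map (U s) = ν) (hUindep : iIndepFun U μ) {g : ℝ → ℝ} (hg : Measurable g)
    (s t : κ) :
    ∫ ω, g (U s ω) * g (U t ω) ∂μ = if s = t then ∫ x, g x ^ 2 ∂ν else (∫ x, g x ∂ν) ^ 2 := by
  have hmoment : ∀ (f : ℝ → ℝ), Measurable f → ∀ s, ∫ ω, f (U s ω) ∂μ = ∫ x, f x ∂ν :=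
    fun f hf s => by rw [← hUν s, integral_map (hU s).aemeasurable hf.aestronglyMeasurable]
  split_ifs with hst
  · subst hst
    simp only [← sq]
    exact hmoment (fun x => g x ^ 2) (hg.pow_const 2) s
  · rw [(hUindep.indepFun hst).integral_fun_comp_mul_comp (hU s).aemeasurable
      (hU t).aemeasurable hg.aestronglyMeasurable hg.aestronglyMeasurable,
      hmoment g hg, hmoment g hg, sq]

variable [Fintype κ] [DecidableEq κ] [MeasurableSpace κ] [MeasurableSingletonClass κ]
  [IsProbabilityMeasure μ]

theorem integral_randomlyIndexed_mul_eq (hU : ∀ s, Measurable (U s))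
    (hUν : ∀ s, μ.map (U s) = ν) (hUindep : iIndepFun U μ) {g : ℝ → ℝ} (hg : Measurable g)
    (hgν : MemLp g 2 ν) {τ₁ τ₂ : Ω → κ} (hτ₁ : Measurable τ₁) (hτ₂ : Measurable τ₂)
    (hτU : IndepFun (fun ω => (τ₁ ω, τ₂ ω)) (fun ω s => U s ω) μ) :
    ∫ ω, g (U (τ₁ ω) ω) * g (U (τ₂ ω) ω) ∂μ
      = μ.real {ω | τ₁ ω = τ₂ ω} * ∫ x, g x ^ 2 ∂ν
        + (1 - μ.real {ω | τ₁ ω = τ₂ ω}) * (∫ x, g x ∂ν) ^ 2 := by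
  have hgU : ∀ s, MemLp (fun ω => g (U s ω)) 2 μ := fun s =>
    (memLp_map_measure_iff hg.aestronglyMeasurable (hU s).aemeasurable).1 ((hUν s).symm ▸ hgν)
  rw [integral_comp_eq_sum_of_indepFun (F := fun st u => g (u st.1) * g (u st.2))
    (hτ₁.prodMk hτ₂) (measurable_pi_lambda _ hU) hτU
    (fun st => (hg.comp (measurable_pi_apply _)).mul (hg.comp (measurable_pi_apply _)))
    (fun st => (hgU st.1).integrable_mul (hgU st.2))]
  simp only [integral_comp_mul_comp_of_iIndepFun hU hUν hUindep hg]
  exact sum_measureReal_preimage_singleton_mul_ite (hτ₁.prodMk hτ₂) (fun st => st.1 = st.2) _ _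

theorem corr_comp_randomlyIndexed_eq (hU : ∀ s, Measurable (U s))
    (hUν : ∀ s, μ.map (U s) = ν) (hUindep : iIndepFun U μ) {τ₁ τ₂ : Ω → κ}
    (hτ₁ : Measurable τ₁) (hτ₂ : Measurable τ₂)
    (hτU : IndepFun (fun ω => (τ₁ ω, τ₂ ω)) (fun ω s => U s ω) μ) {g : ℝ → ℝ}
    (hg : Admissible μ (fun ω => U (τ₁ ω) ω) (fun ω => U (τ₂ ω) ω) g) :
    corr μ (g ∘ fun ω => U (τ₁ ω) ω) (g ∘ fun ω => U (τ₂ ω) ω) = μ.real {ω | τ₁ ω = τ₂ ω} := by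
  obtain ⟨hg, hg₁, hg₂, hvar, -⟩ := hg
  have hX₁ := measurable_randomlyIndexed hU hτ₁
  have hX₂ := measurable_randomlyIndexed hU hτ₂
  have hlaw₁ :=
    map_randomlyIndexed_eq_of_indepFun hU hUν hτ₁ (hτU.comp measurable_fst measurable_id)
  have hlaw₂ :=
    map_randomlyIndexed_eq_of_indepFun hU hUν hτ₂ (hτU.comp measurable_snd measurable_id)
  have hgν : MemLp g 2 ν := by
    rw [← hlaw₁]
    exact (memLp_map_measure_iff hg.aestronglyMeasurable hX₁.aemeasurable).2 hg₁
  exact corr_comp_eq_of_integral_mul_eq hX₁ hX₂ hlaw₁ hlaw₂ hg hg₁ hg₂ hvar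
    (integral_randomlyIndexed_mul_eq hU hUν hUindep hg hgν hτ₁ hτ₂ hτU)

end RandomlyIndexed

section Uniform

open Set

theorem memLp_id_volume_restrict_Icc (a b : ℝ) (p : ENNReal) :
    MemLp id p (volume.restrict (Icc a b)) :=
  memLp_of_bounded ((ae_restrict_mem measurableSet_Icc).mono fun _ hx => hx)
    aestronglyMeasurable_id p

theorem variance_id_volume_restrict_Icc_zero_one :
    variance id (volume.restrict (Icc (0 : ℝ) 1)) = 12⁻¹ := by
  have : IsProbabilityMeasure (volume.restrict (Icc (0 : ℝ) 1)) := ⟨by simp⟩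
  rw [variance_eq_sub (memLp_id_volume_restrict_Icc 0 1 2)]
  simp only [id_eq, Pi.pow_apply, integral_Icc_eq_integral_Ioc,
    ← intervalIntegral.integral_of_le zero_le_one, integral_id, integral_pow]
  norm_num

theorem admissible_id_of_map_eq_volume_restrict_Icc {μ : Measure Ω} {Y Z : Ω → ℝ}
    (hY : Measurable Y) (hZ : Measurable Z)
    (hYlaw : μ.map Y = volume.restrict (Icc (0 : ℝ) 1))
    (hZlaw : μ.map Z = volume.restrict (Icc (0 : ℝ) 1)) : Admissible μ Y Z id := by
  have hmemLp : ∀ W : Ω → ℝ, Measurable W → μ.map W = volume.restrict (Icc (0 : ℝ) 1) →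
      MemLp (id ∘ W) 2 μ := fun W hW hWlaw =>
    (memLp_map_measure_iff aestronglyMeasurable_id hW.aemeasurable).1
      (hWlaw ▸ memLp_id_volume_restrict_Icc 0 1 2)
  have hvar : ∀ W : Ω → ℝ, Measurable W → μ.map W = volume.restrict (Icc (0 : ℝ) 1) →
      0 < variance (id ∘ W) μ := fun W hW hWlaw => by
    rw [← variance_map aemeasurable_id hW.aemeasurable, hWlaw,
      variance_id_volume_restrict_Icc_zero_one]
    norm_num
  exact ⟨measurable_id, hmemLp Y hY hYlaw, hmemLp Z hZ hZlaw, hvar Y hY hYlaw, hvar Z hZ hZlaw⟩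

end Uniform

/-- Let `U₁,…,U_k` be iid uniform on `[0,1]`, and `σ` a random map
`[d] → [k]` independent of `U`. Set `X_i = U_{σ(i)}`. Then each `X_i` is uniform on `[0,1]`,
and for `i ≠ j`, `(X_i, X_j)` has invariant correlation `P(σ(i) = σ(j))`; in particular
`(X₁,…,X_d)` has the invariant correlation matrix `E[ΓΓᵀ]`. -/
theorem categorical_mixture_invariant_correlation
    (μ : Measure Ω) [IsProbabilityMeasure μ] (d k : ℕ)
    (U : Fin k → Ω → ℝ) (hUmeas : ∀ s, Measurable (U s))
    (hUunif : ∀ s, Measure.map (U s) μ = MeasureTheory.volume.restrict (Set.Icc (0 : ℝ) 1))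
    (hUindep : iIndepFun U μ)
    (σ : Ω → Fin d → Fin k) (hσ : Measurable σ)
    (hindep : IndepFun σ (fun ω s => U s ω) μ)
    (X : Fin d → Ω → ℝ) (hX : ∀ i ω, X i ω = U (σ ω i) ω) :
    (∀ i, Measure.map (X i) μ = MeasureTheory.volume.restrict (Set.Icc (0 : ℝ) 1)) ∧
      (∀ i j, i ≠ j →
        (∀ g : ℝ → ℝ, Admissible μ (X i) (X j) g →
          corr μ (g ∘ X i) (g ∘ X j) = (μ {ω | σ ω i = σ ω j}).toReal) ∧
        IC μ (X i) (X j) ((μ {ω | σ ω i = σ ω j}).toReal)) := by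
  obtain rfl : X = fun i ω => U (σ ω i) ω := funext₂ hX
  have hσi : ∀ i, Measurable fun ω => σ ω i := fun i => (measurable_pi_apply i).comp hσ
  have hlaw : ∀ i, μ.map (fun ω => U (σ ω i) ω) = volume.restrict (Set.Icc (0 : ℝ) 1) :=
    fun i => map_randomlyIndexed_eq_of_indepFun hUmeas hUunif (hσi i)
      (hindep.comp (measurable_pi_apply i) measurable_id)
  have hcorr : ∀ i j g, Admissible μ (fun ω => U (σ ω i) ω) (fun ω => U (σ ω j) ω) g →
      corr μ (g ∘ fun ω => U (σ ω i) ω) (g ∘ fun ω => U (σ ω j) ω)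
        = μ.real {ω | σ ω i = σ ω j} := fun i j g hg =>
    corr_comp_randomlyIndexed_eq hUmeas hUunif hUindep (hσi i) (hσi j)
      (hindep.comp (φ := fun f => (f i, f j)) (by fun_prop) measurable_id) hg
  refine ⟨hlaw, fun i j _ => ⟨hcorr i j, hcorr i j id ?_, hcorr i j⟩⟩
  exact admissible_id_of_map_eq_volume_restrict_Icc (measurable_randomlyIndexed hUmeas (hσi i))
    (measurable_randomlyIndexed hUmeas (hσi j)) (hlaw i) (hlaw j)
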